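/- arXiv:1802.05010 — 3 statements merged into one kernel-verified Lean document; each statement's English description precedes it below -/
import Mathlib

section
/- Let K be a field of characteristic 2. In K[x,y,w], the least total degree of a monomial occurring in w·(x+y)⁴ + x¹³ equals 5, and the least total degree of a monomial occurring in w·y⁶ + x⁸ + x⁸·y² equals 7. Consequently, the residual order of f = z⁴ + x²y²w³·(w(x+y)⁴ + x¹³) with respect to the normal crossings divisor V(xyw) is 5, the residual order of its cleaned strict transform z⁴ + x⁸w³·(wy⁶ + x⁸ + x⁸y²) with respect to V(xw) is 7, and 7 > ⌊5/2⌋·2 + 2 = 6, so the bound ⌊d/p^r⌋·p^r + p^r claimed in Moh's stability argument fails for this blowup (here d = 5, p^r = 2). -/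
open MvPolynomial

private lemma moh_aux (K : Type*) [Field K] (a b c : Fin 3 →₀ ℕ)
    (hab : b ≠ a) (hac : c ≠ a) :
    a ∈ (monomial a 1 + monomial b 1 + monomial c 1 : MvPolynomial (Fin 3) K).support ∧
    ∀ d ∈ (monomial a 1 + monomial b 1 + monomial c 1 : MvPolynomial (Fin 3) K).support,
      d = a ∨ d = b ∨ d = c := by
  constructor
  · rw [MvPolynomial.mem_support_iff]
    simp [MvPolynomial.coeff_add, MvPolynomial.coeff_monomial, hab, hac]
  · intro d hd
    rcases Finset.mem_union.mp (MvPolynomial.support_add hd) with h | h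
    · rcases Finset.mem_union.mp (MvPolynomial.support_add h) with h' | h'
      · left; exact (by simpa [MvPolynomial.support_monomial] using h' : a = d).symm
      · right; left; exact (by simpa [MvPolynomial.support_monomial] using h' : b = d).symm
    · right; right; exact (by simpa [MvPolynomial.support_monomial] using h : c = d).symm

/-- Let `K` be a field of characteristic `2`.  In `K[x,y,w]`
(with `x = X 0`, `y = X 1`, `w = X 2`), the least total degree of a monomial occurring in
`w·(x+y)⁴ + x¹³` equals `5`, and the least total degree of a monomial occurring in
`w·y⁶ + x⁸ + x⁸·y²` equals `7`.  Consequently the residual order of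
`f = z⁴ + x²y²w³·(w(x+y)⁴ + x¹³)` w.r.t. `V(xyw)` is `5`, that of its cleaned strict
transform `z⁴ + x⁸w³·(wy⁶ + x⁸ + x⁸y²)` w.r.t. `V(xw)` is `7`, and `7 > ⌊5/2⌋·2 + 2 = 6`,
so Moh's claimed bound `⌊d/p^r⌋·p^r + p^r` (here `d = 5`, `p^r = 2`) fails. -/
theorem moh_bound_fails (K : Type*) [Field K] [CharP K 2] :
    ((∃ d ∈ (X 2 * (X 0 + X 1) ^ 4 + X 0 ^ 13 : MvPolynomial (Fin 3) K).support,
        (d.sum fun _ e => e) = 5) ∧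
      ∀ d ∈ (X 2 * (X 0 + X 1) ^ 4 + X 0 ^ 13 : MvPolynomial (Fin 3) K).support,
        5 ≤ d.sum fun _ e => e) ∧
    ((∃ d ∈ (X 2 * X 1 ^ 6 + X 0 ^ 8 + X 0 ^ 8 * X 1 ^ 2 : MvPolynomial (Fin 3) K).support,
        (d.sum fun _ e => e) = 7) ∧
      ∀ d ∈ (X 2 * X 1 ^ 6 + X 0 ^ 8 + X 0 ^ 8 * X 1 ^ 2 : MvPolynomial (Fin 3) K).support,
        7 ≤ d.sum fun _ e => e) ∧
    7 > 5 / 2 * 2 + 2 := by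
  have h4 : ((X 0 + X 1 : MvPolynomial (Fin 3) K)) ^ 4 = X 0 ^ 4 + X 1 ^ 4 := by
    rw [show (4:ℕ) = 2 ^ 2 by norm_num, add_pow_char_pow]
  have e1 : (X 2 * (X 0 + X 1) ^ 4 + X 0 ^ 13 : MvPolynomial (Fin 3) K)
      = monomial (Finsupp.single 2 1 + Finsupp.single 0 4) 1
        + monomial (Finsupp.single 2 1 + Finsupp.single 1 4) 1
        + monomial (Finsupp.single 0 13) 1 := by
    rw [h4, mul_add]
    simp only [X_pow_eq_monomial, X, monomial_mul, monomial_pow, one_mul, one_pow,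
      Finsupp.smul_single, smul_eq_mul, mul_one]
  have e2 : (X 2 * X 1 ^ 6 + X 0 ^ 8 + X 0 ^ 8 * X 1 ^ 2 : MvPolynomial (Fin 3) K)
      = monomial (Finsupp.single 2 1 + Finsupp.single 1 6) 1
        + monomial (Finsupp.single 0 8) 1
        + monomial (Finsupp.single 0 8 + Finsupp.single 1 2) 1 := by
    simp only [X_pow_eq_monomial, X, monomial_mul, monomial_pow, one_mul, one_pow,
      Finsupp.smul_single, smul_eq_mul, mul_one]
  have h1 := moh_aux K (Finsupp.single 2 1 + Finsupp.single 0 4)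
      (Finsupp.single 2 1 + Finsupp.single 1 4) (Finsupp.single 0 13)
      (by intro h; have := DFunLike.congr_fun h 0; simp [Finsupp.single_apply] at this)
      (by intro h; have := DFunLike.congr_fun h 2; simp [Finsupp.single_apply] at this)
  have h2 := moh_aux K (Finsupp.single 2 1 + Finsupp.single 1 6)
      (Finsupp.single 0 8) (Finsupp.single 0 8 + Finsupp.single 1 2)
      (by intro h; have := DFunLike.congr_fun h 2; simp [Finsupp.single_apply] at this)
      (by intro h; have := DFunLike.congr_fun h 2; simp [Finsupp.single_apply] at this)
  rw [e1, e2]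
  refine ⟨⟨⟨_, h1.1, ?_⟩, ?_⟩, ⟨⟨_, h2.1, ?_⟩, ?_⟩, by norm_num⟩
  · simp [Finsupp.sum_add_index', Finsupp.sum_single_index]
  · intro d hd
    rcases h1.2 d hd with rfl | rfl | rfl <;>
      simp [Finsupp.sum_add_index', Finsupp.sum_single_index]
  · simp [Finsupp.sum_add_index', Finsupp.sum_single_index]
  · intro d hd
    rcases h2.2 d hd with rfl | rfl | rfl <;>
      simp [Finsupp.sum_add_index', Finsupp.sum_single_index]
end

section
/- Let K be an algebraically closed field of characteristic 2 and R = K[[z,x,y,u,v,w]]. Let d ≥ 2 be an even integer, let a, b, r, s be non-negative integers with 8s ≥ d, let λ ∈ K∖{0}, let Q ∈ K[[x,y,u,v,w]] be arbitrary and let A ∈ K[[x,y,u,v,w]] be a unit. Set f = z⁸ + x^{8a+4} y^{8b+4} u^{8r} w^{8s−d}·( w^d·(λ + u^{2d+6}·Q) + x^{d+1} u^{2d+6}·A ). Let σ : R → R be the substitution determined by z↦x·z, x↦x, y↦x·(y+1), u↦x·(u+1), v↦x·v, w↦x·w. Then there exist g ∈ K[[x,y,u,v,w]], units B₁, A₁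 ∈ K[[x,y,u,v,w]] and a series Q₁ ∈ K[[x,y,u,v,w]] such that σ(f) = x⁸·( (z+g)⁸ + x^{8(a+b+r+s)} w^{8s−d}·( w^d y⁴·B₁ + w^d x^{2d+6}·Q₁ + x^{2d+7}·A₁ ) ). (One may take g = λ^{1/8}·x^{a+b+r+s}·w^{s}·(y+1)^{b}·(u+1)^{r}.) -/
noncomputable section

open MvPowerSeries

/-- Substitution of power series (with zero constant terms) into a multivariate power
series, defined coefficient-wise: this is the unique continuous `K`-algebra endomorphism
of `K[[x_1,…,x_n]]` sending the variable `X i` to `s i`. -/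
def psSubst {K : Type*} [Field K] {n : ℕ} (s : Fin n → MvPowerSeries (Fin n) K)
    (f : MvPowerSeries (Fin n) K) : MvPowerSeries (Fin n) K := fun e =>
  ∑ d ∈ Finset.Iic (Finsupp.equivFunOnFinite.symm fun _ : Fin n => e.sum fun _ k => k),
    MvPowerSeries.coeff (R := K) d f * MvPowerSeries.coeff (R := K) e (∏ i, s i ^ d i)

/-- The power series `f` does not involve the variable `X i₀`. -/
def avoids {K : Type*} [Field K] {n : ℕ} (i₀ : Fin n) (f : MvPowerSeries (Fin n) K) : Prop :=
  ∀ d : Fin n →₀ ℕ, d i₀ ≠ 0 → MvPowerSeries.coeff (R := K) d f = 0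

/-- The order (least total degree of an occurring monomial) of `f` equals `m`. -/
def ordIs {K : Type*} [Field K] {n : ℕ} (f : MvPowerSeries (Fin n) K) (m : ℕ) : Prop :=
  (∃ d : Fin n →₀ ℕ, (d.sum fun _ k => k) = m ∧ MvPowerSeries.coeff (R := K) d f ≠ 0) ∧
  ∀ d : Fin n →₀ ℕ, MvPowerSeries.coeff (R := K) d f ≠ 0 → m ≤ d.sum fun _ k => k

namespace Aux

variable {K : Type*} [Field K] {n : ℕ}

/-- total degree of an exponent -/
def wt (e : Fin n →₀ ℕ) : ℕ := e.sum fun _ k => k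

lemma wt_add (e₁ e₂ : Fin n →₀ ℕ) : wt (e₁ + e₂) = wt e₁ + wt e₂ := by
  unfold wt
  exact Finsupp.sum_add_index' (fun _ => rfl) (fun _ _ _ => rfl)

lemma wt_eq_zero_iff (e : Fin n →₀ ℕ) : wt e = 0 ↔ e = 0 := by
  unfold wt
  constructor
  · intro h
    ext i
    by_contra hi
    have hmem : i ∈ e.support := Finsupp.mem_support_iff.mpr (by simpa using hi)
    have := Finset.sum_eq_zero_iff.mp h i hmem
    simp at this hi
    exact hi this
  · rintro rfl; simp

lemma le_wt (e : Fin n →₀ ℕ) (i : Fin n) : e i ≤ wt e := by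
  unfold wt Finsupp.sum
  by_cases h : i ∈ e.support
  · exact Finset.single_le_sum (fun _ _ => Nat.zero_le _) h
  · simp [Finsupp.notMem_support_iff.mp h]

lemma coeff_pow_mul_eq_zero {g : MvPowerSeries (Fin n) K}
    (hg : constantCoeff (σ := Fin n) (R := K) g = 0) (m : ℕ) :
    ∀ (h : MvPowerSeries (Fin n) K) (e : Fin n →₀ ℕ), wt e < m →
      MvPowerSeries.coeff (R := K) e (g ^ m * h) = 0 := by
  induction m with
  | zero => intro h e he; omega
  | succ m ih =>
    intro h e he
    rw [pow_succ', mul_assoc, MvPowerSeries.coeff_mul]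
    refine Finset.sum_eq_zero fun p hp => ?_
    rcases eq_or_ne p.1 0 with h1 | h1
    · rw [h1]
      simp [MvPowerSeries.coeff_zero_eq_constantCoeff, hg]
    · have hsum := Finset.HasAntidiagonal.mem_antidiagonal.mp hp
      have h1' : 1 ≤ wt p.1 := by
        rcases Nat.eq_zero_or_pos (wt p.1) with h0 | h0
        · exact absurd ((wt_eq_zero_iff p.1).mp h0) h1
        · exact h0
      have : wt p.2 < m := by
        have := wt_add p.1 p.2
        rw [hsum] at this
        omega
      rw [ih h p.2 this, mul_zero]

lemma coeff_prod_pow_eq_zero {s : Fin n → MvPowerSeries (Fin n) K}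
    (hs : ∀ i, constantCoeff (σ := Fin n) (R := K) (s i) = 0)
    (d e : Fin n →₀ ℕ) (i : Fin n) (hi : wt e < d i) :
    MvPowerSeries.coeff (R := K) e (∏ j, s j ^ d j) = 0 := by
  rw [← Finset.mul_prod_erase Finset.univ _ (Finset.mem_univ i)]
  exact coeff_pow_mul_eq_zero (hs i) (d i) _ e hi

/-- The coefficient of `psSubst` can be computed with any sufficiently large index set. -/
lemma coeff_psSubst (s : Fin n → MvPowerSeries (Fin n) K)
    (hs : ∀ i, constantCoeff (σ := Fin n) (R := K) (s i) = 0)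
    (f : MvPowerSeries (Fin n) K) (e : Fin n →₀ ℕ)
    (T : Finset (Fin n →₀ ℕ)) (hT : ∀ d : Fin n →₀ ℕ, (∀ i, d i ≤ wt e) → d ∈ T) :
    MvPowerSeries.coeff (R := K) e (psSubst s f) =
      ∑ d ∈ T, MvPowerSeries.coeff (R := K) d f * MvPowerSeries.coeff (R := K) e (∏ i, s i ^ d i) := by
  have hIic : ∀ d : Fin n →₀ ℕ,
      d ∈ Finset.Iic (Finsupp.equivFunOnFinite.symm fun _ : Fin n => wt e) ↔ ∀ i, d i ≤ wt e := by
    intro d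
    rw [Finset.mem_Iic]
    constructor
    · intro h i; exact h i
    · intro h i; exact h i
  have hsub : Finset.Iic (Finsupp.equivFunOnFinite.symm fun _ : Fin n => wt e) ⊆ T := by
    intro d hd; exact hT d ((hIic d).mp hd)
  have : MvPowerSeries.coeff (R := K) e (psSubst s f) =
      ∑ d ∈ Finset.Iic (Finsupp.equivFunOnFinite.symm fun _ : Fin n => wt e),
        MvPowerSeries.coeff (R := K) d f * MvPowerSeries.coeff (R := K) e (∏ i, s i ^ d i) := rfl
  rw [this]
  refine Finset.sum_subset hsub fun d hdT hdIic => ?_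
  have : ¬ (∀ i, d i ≤ wt e) := fun h => hdIic ((hIic d).mpr h)
  push_neg at this
  obtain ⟨i, hi⟩ := this
  rw [coeff_prod_pow_eq_zero hs d e i hi, mul_zero]

end Aux

namespace Aux

variable {K : Type*} [Field K] {n : ℕ}
variable {s : Fin n → MvPowerSeries (Fin n) K}
  (hs : ∀ i, constantCoeff (σ := Fin n) (R := K) (s i) = 0)

lemma psSubst_add (f g : MvPowerSeries (Fin n) K) :
    psSubst s (f + g) = psSubst s f + psSubst s g := by
  ext e
  have h1 : MvPowerSeries.coeff (R := K) e (psSubst s f + psSubst s g) =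
      MvPowerSeries.coeff (R := K) e (psSubst s f) + MvPowerSeries.coeff (R := K) e (psSubst s g) :=
    map_add _ _ _
  show MvPowerSeries.coeff (R := K) e (psSubst s (f+g)) = _
  rw [h1]
  show (∑ d ∈ _, _) = (∑ d ∈ _, _) + (∑ d ∈ _, _)
  rw [← Finset.sum_add_distrib]
  refine Finset.sum_congr rfl fun d _ => ?_
  rw [map_add, add_mul]

lemma psSubst_zero : psSubst s (0 : MvPowerSeries (Fin n) K) = 0 := by
  ext e
  show (∑ d ∈ _, _) = _
  simp

lemma psSubst_C (c : K) : psSubst s (C (σ := Fin n) (R := K) c) = C (σ := Fin n) (R := K) c := by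
  ext e
  show (∑ d ∈ _, _) = _
  rw [Finset.sum_eq_single (0 : Fin n →₀ ℕ)]
  · rw [MvPowerSeries.coeff_C, if_pos rfl]
    simp [MvPowerSeries.coeff_one, MvPowerSeries.coeff_C]
  · intro d _ hd
    rw [MvPowerSeries.coeff_C, if_neg hd, zero_mul]
  · intro h
    exact absurd (Finset.mem_Iic.mpr (by intro i; exact Nat.zero_le _)) h

lemma psSubst_one : psSubst s (1 : MvPowerSeries (Fin n) K) = 1 := by
  have : (1 : MvPowerSeries (Fin n) K) = C (σ := Fin n) (R := K) 1 := by simp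
  rw [this, psSubst_C]

include hs in
lemma psSubst_X (i : Fin n) : psSubst s (X i) = s i := by
  ext e
  show (∑ d ∈ _, _) = _
  rw [Finset.sum_eq_single (Finsupp.single i 1)]
  · rw [MvPowerSeries.coeff_X, if_pos rfl, one_mul]
    congr 1
    rw [Finset.prod_eq_single i]
    · rw [Finsupp.single_eq_same, pow_one]
    · intro j _ hj
      rw [Finsupp.single_eq_of_ne hj, pow_zero]
    · intro h; exact absurd (Finset.mem_univ i) h
  · intro d _ hd
    rw [MvPowerSeries.coeff_X, if_neg hd, zero_mul]
  · intro hmem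
    have hwt : wt e < (Finsupp.single i 1) i := by
      by_contra hcon
      push_neg at hcon
      refine hmem (Finset.mem_Iic.mpr ?_)
      intro j
      rcases eq_or_ne j i with rfl | hji
      · simpa [wt] using hcon
      · simp [Finsupp.single_eq_of_ne hji]
    rw [coeff_prod_pow_eq_zero hs _ e i hwt, mul_zero]

lemma prod_pow_add (d1 d2 : Fin n →₀ ℕ) :
    (∏ i, s i ^ (d1 + d2) i) = (∏ i, s i ^ d1 i) * (∏ i, s i ^ d2 i) := by
  rw [← Finset.prod_mul_distrib]
  refine Finset.prod_congr rfl fun i _ => ?_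
  rw [Finsupp.add_apply, pow_add]

include hs in
lemma psSubst_mul (f g : MvPowerSeries (Fin n) K) :
    psSubst s (f * g) = psSubst s f * psSubst s g := by
  ext e
  set B : Finset (Fin n →₀ ℕ) :=
    Finset.Iic (Finsupp.equivFunOnFinite.symm fun _ : Fin n => wt e) with hB
  have hBmem : ∀ d : Fin n →₀ ℕ, d ∈ B ↔ ∀ i, d i ≤ wt e := by
    intro d; rw [hB, Finset.mem_Iic]; exact ⟨fun h i => h i, fun h i => h i⟩
  have hBin : ∀ d : Fin n →₀ ℕ, (∀ i, d i ≤ wt e) → d ∈ B := fun d hd => (hBmem d).mpr hd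
  set H : (Fin n →₀ ℕ) × (Fin n →₀ ℕ) → K := fun p =>
    MvPowerSeries.coeff (R := K) p.1 f * MvPowerSeries.coeff (R := K) p.2 g *
      MvPowerSeries.coeff (R := K) e ((∏ i, s i ^ p.1 i) * (∏ i, s i ^ p.2 i)) with hH
  have hdis : (B : Set (Fin n →₀ ℕ)).PairwiseDisjoint Finset.HasAntidiagonal.antidiagonal := by
    intro d1 _ d2 _ hne
    rw [Function.onFun, Finset.disjoint_left]
    intro p hp1 hp2
    exact hne ((Finset.HasAntidiagonal.mem_antidiagonal.mp hp1).symm.trans (Finset.HasAntidiagonal.mem_antidiagonal.mp hp2))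
  have hsub : B.biUnion Finset.HasAntidiagonal.antidiagonal ⊆ B ×ˢ B := by
    intro p hp
    obtain ⟨dd, hdB, hpd⟩ := Finset.mem_biUnion.mp hp
    have hdd := Finset.HasAntidiagonal.mem_antidiagonal.mp hpd
    have hddB := (hBmem dd).mp hdB
    refine Finset.mem_product.mpr ⟨(hBmem p.1).mpr fun i => ?_, (hBmem p.2).mpr fun i => ?_⟩
    · refine le_trans ?_ (hddB i)
      rw [← hdd, Finsupp.add_apply]; omega
    · refine le_trans ?_ (hddB i)
      rw [← hdd, Finsupp.add_apply]; omega
  have hvan : ∀ p ∈ B ×ˢ B, p ∉ B.biUnion Finset.HasAntidiagonal.antidiagonal → H p = 0 := by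
    intro p _ hnot
    have hsumB : p.1 + p.2 ∉ B := by
      intro hc
      exact hnot (Finset.mem_biUnion.mpr ⟨p.1 + p.2, hc, Finset.HasAntidiagonal.mem_antidiagonal.mpr rfl⟩)
    have : ¬ ∀ i, (p.1 + p.2) i ≤ wt e := fun h => hsumB ((hBmem _).mpr h)
    push_neg at this
    obtain ⟨i, hi⟩ := this
    rw [Finsupp.add_apply] at hi
    have hcoeff : MvPowerSeries.coeff (R := K) e ((∏ j, s j ^ p.1 j) * (∏ j, s j ^ p.2 j)) = 0 := by
      rw [MvPowerSeries.coeff_mul]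
      refine Finset.sum_eq_zero fun q hq => ?_
      have hqe := Finset.HasAntidiagonal.mem_antidiagonal.mp hq
      have hwt : wt q.1 + wt q.2 = wt e := by rw [← wt_add, hqe]
      rcases Nat.lt_or_ge (wt q.1) (p.1 i) with h1 | h1
      · rw [coeff_prod_pow_eq_zero hs p.1 q.1 i h1, zero_mul]
      · have h2 : wt q.2 < p.2 i := by omega
        rw [coeff_prod_pow_eq_zero hs p.2 q.2 i h2, mul_zero]
    rw [hH]
    simp only []
    rw [hcoeff, mul_zero]
  have hLHS : MvPowerSeries.coeff (R := K) e (psSubst s (f * g)) = ∑ p ∈ B ×ˢ B, H p := by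
    rw [coeff_psSubst s hs (f * g) e B hBin]
    have step1 : ∀ dd ∈ B, MvPowerSeries.coeff (R := K) dd (f * g) *
        MvPowerSeries.coeff (R := K) e (∏ i, s i ^ dd i) =
        ∑ p ∈ Finset.HasAntidiagonal.antidiagonal dd, H p := by
      intro dd _
      rw [MvPowerSeries.coeff_mul, Finset.sum_mul]
      refine Finset.sum_congr rfl fun p hp => ?_
      rw [hH]
      simp only []
      rw [← prod_pow_add, Finset.HasAntidiagonal.mem_antidiagonal.mp hp]
    rw [Finset.sum_congr rfl step1, ← Finset.sum_biUnion hdis]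
    exact Finset.sum_subset hsub hvan
  have hRHS : MvPowerSeries.coeff (R := K) e (psSubst s f * psSubst s g) = ∑ p ∈ B ×ˢ B, H p := by
    rw [MvPowerSeries.coeff_mul]
    have step1 : ∀ q ∈ Finset.HasAntidiagonal.antidiagonal e,
        MvPowerSeries.coeff (R := K) q.1 (psSubst s f) * MvPowerSeries.coeff (R := K) q.2 (psSubst s g) =
        ∑ p ∈ B ×ˢ B, (MvPowerSeries.coeff (R := K) p.1 f *
          MvPowerSeries.coeff (R := K) q.1 (∏ i, s i ^ p.1 i)) *
          (MvPowerSeries.coeff (R := K) p.2 g * MvPowerSeries.coeff (R := K) q.2 (∏ i, s i ^ p.2 i)) := by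
      intro q hq
      have hqe := Finset.HasAntidiagonal.mem_antidiagonal.mp hq
      have h1 : wt q.1 ≤ wt e := by rw [← hqe, wt_add]; omega
      have h2 : wt q.2 ≤ wt e := by rw [← hqe, wt_add]; omega
      rw [coeff_psSubst s hs f q.1 B (fun dd hdd => hBin dd fun i =>
            le_trans (hdd i) h1),
          coeff_psSubst s hs g q.2 B (fun dd hdd => hBin dd fun i =>
            le_trans (hdd i) h2),
          Finset.sum_mul_sum]
      rw [← Finset.sum_product']
    rw [Finset.sum_congr rfl step1, Finset.sum_comm]
    refine Finset.sum_congr rfl fun p _ => ?_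
    rw [hH]
    simp only []
    rw [MvPowerSeries.coeff_mul, Finset.mul_sum]
    refine Finset.sum_congr rfl fun q _ => by ring
  rw [hLHS, hRHS]

end Aux

namespace Aux2
open Aux
variable {K : Type*} [Field K] {n : ℕ}
variable {s : Fin n → MvPowerSeries (Fin n) K}

def psSubstHom (hs : ∀ i, constantCoeff (σ := Fin n) (R := K) (s i) = 0) :
    MvPowerSeries (Fin n) K →+* MvPowerSeries (Fin n) K where
  toFun := psSubst s
  map_one' := psSubst_one
  map_mul' := psSubst_mul hs
  map_zero' := psSubst_zero
  map_add' := psSubst_add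


variable {i₀ : Fin n}

lemma avoids_add {f g : MvPowerSeries (Fin n) K} (hf : avoids i₀ f) (hg : avoids i₀ g) :
    avoids i₀ (f + g) := fun d hd => by rw [map_add, hf d hd, hg d hd, add_zero]

lemma avoids_mul {f g : MvPowerSeries (Fin n) K} (hf : avoids i₀ f) (hg : avoids i₀ g) :
    avoids i₀ (f * g) := by
  intro d hd
  rw [MvPowerSeries.coeff_mul]
  refine Finset.sum_eq_zero fun p hp => ?_
  have hpd := Finset.HasAntidiagonal.mem_antidiagonal.mp hp
  by_cases h1 : p.1 i₀ = 0
  · have h2 : p.2 i₀ ≠ 0 := by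
      intro h2
      apply hd
      rw [← hpd, Finsupp.add_apply, h1, h2]
    rw [hg p.2 h2, mul_zero]
  · rw [hf p.1 h1, zero_mul]

lemma avoids_one : avoids i₀ (1 : MvPowerSeries (Fin n) K) := by
  intro d hd
  rw [MvPowerSeries.coeff_one, if_neg]
  intro h
  rw [h] at hd
  simp at hd

lemma avoids_C (c : K) : avoids i₀ (C (σ := Fin n) (R := K) c) := by
  intro d hd
  rw [MvPowerSeries.coeff_C, if_neg]
  intro h
  rw [h] at hd
  simp at hd

lemma avoids_pow {f : MvPowerSeries (Fin n) K} (hf : avoids i₀ f) (m : ℕ) :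
    avoids i₀ (f ^ m) := by
  induction m with
  | zero => rw [pow_zero]; exact avoids_one
  | succ m ih => rw [pow_succ]; exact avoids_mul ih hf

lemma avoids_X {j : Fin n} (hj : j ≠ i₀) : avoids i₀ (X j : MvPowerSeries (Fin n) K) := by
  intro d hd
  rw [MvPowerSeries.coeff_X, if_neg]
  intro h
  rw [h] at hd
  rw [Finsupp.single_eq_of_ne (Ne.symm hj)] at hd
  exact hd rfl

lemma avoids_prod {ι : Type*} (T : Finset ι) (F : ι → MvPowerSeries (Fin n) K)
    (h : ∀ j ∈ T, avoids i₀ (F j)) : avoids i₀ (∏ j ∈ T, F j) :=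
  Finset.prod_induction F (avoids i₀) (fun _ _ => avoids_mul) avoids_one h

lemma avoids_psSubst (hs : ∀ i, constantCoeff (σ := Fin n) (R := K) (s i) = 0)
    (hsa : ∀ i, i ≠ i₀ → avoids i₀ (s i)) {f : MvPowerSeries (Fin n) K}
    (hf : avoids i₀ f) : avoids i₀ (psSubst s f) := by
  intro e he
  show (∑ d ∈ _, _) = 0
  refine Finset.sum_eq_zero fun d _ => ?_
  by_cases hd : d i₀ = 0
  · have hav : avoids i₀ (∏ j, s j ^ d j) := by
      refine avoids_prod _ _ fun j _ => ?_
      rcases eq_or_ne j i₀ with rfl | hji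
      · rw [hd, pow_zero]; exact avoids_one
      · exact avoids_pow (hsa j hji) _
    rw [hav e he, mul_zero]
  · rw [hf d hd, zero_mul]

lemma constantCoeff_psSubst (hs : ∀ i, constantCoeff (σ := Fin n) (R := K) (s i) = 0)
    (f : MvPowerSeries (Fin n) K) :
    constantCoeff (σ := Fin n) (R := K) (psSubst s f) = constantCoeff (σ := Fin n) (R := K) f := by
  simp only [← MvPowerSeries.coeff_zero_eq_constantCoeff]
  rw [coeff_psSubst s hs f 0 {0} ?_]
  · rw [Finset.sum_singleton]
    have : (∏ i, s i ^ (0 : Fin n →₀ ℕ) i) = 1 := by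
      refine Finset.prod_eq_one fun i _ => ?_
      rw [Finsupp.coe_zero, Pi.zero_apply, pow_zero]
    rw [this, MvPowerSeries.coeff_zero_eq_constantCoeff, map_one, mul_one]
  · intro dd hdd
    have hw : wt (0 : Fin n →₀ ℕ) = 0 := by simp [wt]
    rw [Finset.mem_singleton]
    ext i
    have := hdd i
    rw [hw] at this
    simpa using this

end Aux2


set_option maxHeartbeats 1600000 in
/-- Characteristic-2 example, blowup (1): `x`-chart with translations
`y ↦ y+1`, `u ↦ u+1`, followed by cleaning.  Variables: `z = X 0`, `x = X 1`, `y = X 2`,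
`u = X 3`, `v = X 4`, `w = X 5` in `R = K[[z,x,y,u,v,w]]`. -/
theorem char2_first_blowup (K : Type*) [Field K] [IsAlgClosed K] [CharP K 2]
    (d a b r s : ℕ) (hd2 : 2 ≤ d) (hdE : Even d) (hsd : d ≤ 8 * s)
    (lam : K) (hlam : lam ≠ 0)
    (Q A : MvPowerSeries (Fin 6) K) (hQz : avoids 0 Q) (hAz : avoids 0 A)
    (hA : constantCoeff (σ := Fin 6) (R := K) A ≠ 0)
    (f : MvPowerSeries (Fin 6) K)
    (hf : f = X 0 ^ 8 + X 1 ^ (8 * a + 4) * X 2 ^ (8 * b + 4) * X 3 ^ (8 * r) *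
        X 5 ^ (8 * s - d) *
        (X 5 ^ d * (C (σ := Fin 6) (R := K) lam + X 3 ^ (2 * d + 6) * Q) +
          X 1 ^ (d + 1) * X 3 ^ (2 * d + 6) * A))
    (σ : MvPowerSeries (Fin 6) K → MvPowerSeries (Fin 6) K)
    (hσ : σ = psSubst ![X 1 * X 0, X 1, X 1 * (X 2 + 1), X 1 * (X 3 + 1),
        X 1 * X 4, X 1 * X 5]) :
    ∃ g B₁ A₁ Q₁ : MvPowerSeries (Fin 6) K,
      avoids 0 g ∧ avoids 0 B₁ ∧ avoids 0 A₁ ∧ avoids 0 Q₁ ∧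
      constantCoeff (σ := Fin 6) (R := K) B₁ ≠ 0 ∧ constantCoeff (σ := Fin 6) (R := K) A₁ ≠ 0 ∧
      σ f = X 1 ^ 8 * ((X 0 + g) ^ 8 +
        X 1 ^ (8 * (a + b + r + s)) * X 5 ^ (8 * s - d) *
          (X 5 ^ d * X 2 ^ 4 * B₁ + X 5 ^ d * X 1 ^ (2 * d + 6) * Q₁ +
            X 1 ^ (2 * d + 7) * A₁)) := by
  classical
  set sfun : Fin 6 → MvPowerSeries (Fin 6) K :=
    ![X 1 * X 0, X 1, X 1 * (X 2 + 1), X 1 * (X 3 + 1), X 1 * X 4, X 1 * X 5] with hsfun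
  have hs : ∀ i, constantCoeff (σ := Fin 6) (R := K) (sfun i) = 0 := by
    intro i
    fin_cases i
    · show constantCoeff (σ := Fin 6) (R := K) (X 1 * X 0) = 0
      simp [MvPowerSeries.constantCoeff_X]
    · show constantCoeff (σ := Fin 6) (R := K) (X 1) = 0
      simp [MvPowerSeries.constantCoeff_X]
    · show constantCoeff (σ := Fin 6) (R := K) (X 1 * (X 2 + 1)) = 0
      simp [MvPowerSeries.constantCoeff_X]
    · show constantCoeff (σ := Fin 6) (R := K) (X 1 * (X 3 + 1)) = 0
      simp [MvPowerSeries.constantCoeff_X]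
    · show constantCoeff (σ := Fin 6) (R := K) (X 1 * X 4) = 0
      simp [MvPowerSeries.constantCoeff_X]
    · show constantCoeff (σ := Fin 6) (R := K) (X 1 * X 5) = 0
      simp [MvPowerSeries.constantCoeff_X]
  have hσ' : σ = ⇑(Aux2.psSubstHom hs) := by rw [hσ]; rfl
  have hX0 : (Aux2.psSubstHom hs) (X (0 : Fin 6)) = X 1 * X 0 := Aux.psSubst_X hs 0
  have hX1 : (Aux2.psSubstHom hs) (X (1 : Fin 6)) = X 1 := Aux.psSubst_X hs 1
  have hX2 : (Aux2.psSubstHom hs) (X (2 : Fin 6)) = X 1 * (X 2 + 1) := Aux.psSubst_X hs 2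
  have hX3 : (Aux2.psSubstHom hs) (X (3 : Fin 6)) = X 1 * (X 3 + 1) := Aux.psSubst_X hs 3
  have hX5 : (Aux2.psSubstHom hs) (X (5 : Fin 6)) = X 1 * X 5 := Aux.psSubst_X hs 5
  have hCl : (Aux2.psSubstHom hs) (C (σ := Fin 6) (R := K) lam) = C (σ := Fin 6) (R := K) lam := Aux.psSubst_C lam
  haveI : Fact (Nat.Prime 2) := ⟨Nat.prime_two⟩
  have hCinj : Function.Injective (C (σ := Fin 6) (R := K)) := fun x y h => by
    simpa using congrArg (constantCoeff (σ := Fin 6) (R := K)) h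
  haveI hch : CharP (MvPowerSeries (Fin 6) K) 2 := charP_of_injective_ringHom hCinj 2
  have h8 : ∀ x y : MvPowerSeries (Fin 6) K, (x + y) ^ 8 = x ^ 8 + y ^ 8 := by
    intro x y
    have h := add_pow_char_pow (R := MvPowerSeries (Fin 6) K) (p := 2) (n := 3) (x := x) (y := y)
    norm_num at h
    exact h
  have h4 : ((X 2 : MvPowerSeries (Fin 6) K) + 1) ^ 4 = (X 2) ^ 4 + 1 := by
    have h := add_pow_char_pow (R := MvPowerSeries (Fin 6) K) (p := 2) (n := 2)
      (x := (X 2 : MvPowerSeries (Fin 6) K)) (y := 1)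
    norm_num at h
    exact h
  obtain ⟨μ, hμ⟩ := IsAlgClosed.exists_pow_nat_eq lam (n := 8) (by norm_num)
  obtain ⟨t, ht⟩ : ∃ t, 8 * s = t + d := ⟨8 * s - d, by omega⟩
  have hstd : 8 * s - d = t := by omega
  rw [hstd] at hf ⊢
  -- basic avoids facts
  have av1 : avoids 0 (X 1 : MvPowerSeries (Fin 6) K) := Aux2.avoids_X (by decide)
  have av2 : avoids 0 ((X 2 : MvPowerSeries (Fin 6) K) + 1) :=
    Aux2.avoids_add (Aux2.avoids_X (by decide)) Aux2.avoids_one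
  have av3 : avoids 0 ((X 3 : MvPowerSeries (Fin 6) K) + 1) :=
    Aux2.avoids_add (Aux2.avoids_X (by decide)) Aux2.avoids_one
  have av5 : avoids 0 (X 5 : MvPowerSeries (Fin 6) K) := Aux2.avoids_X (by decide)
  have hsa : ∀ i : Fin 6, i ≠ 0 → avoids 0 (sfun i) := by
    intro i hi
    fin_cases i
    · exact absurd rfl hi
    · exact av1
    · exact Aux2.avoids_mul av1 av2
    · exact Aux2.avoids_mul av1 av3
    · exact Aux2.avoids_mul av1 (Aux2.avoids_X (by decide))
    · exact Aux2.avoids_mul av1 av5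
  have avQ : avoids 0 ((Aux2.psSubstHom hs) Q) := Aux2.avoids_psSubst hs hsa hQz
  have avA : avoids 0 ((Aux2.psSubstHom hs) A) := Aux2.avoids_psSubst hs hsa hAz
  refine ⟨C (σ := Fin 6) (R := K) μ * X 1 ^ (a + b + r + s) * X 5 ^ s * (X 2 + 1) ^ b * (X 3 + 1) ^ r,
    C (σ := Fin 6) (R := K) lam * (X 2 + 1) ^ (8 * b) * (X 3 + 1) ^ (8 * r),
    (X 2 + 1) ^ (8 * b + 4) * (X 3 + 1) ^ (8 * r + (2 * d + 6)) * ((Aux2.psSubstHom hs) A),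
    (X 2 + 1) ^ (8 * b + 4) * (X 3 + 1) ^ (8 * r + (2 * d + 6)) * ((Aux2.psSubstHom hs) Q),
    ?_, ?_, ?_, ?_, ?_, ?_, ?_⟩
  · exact Aux2.avoids_mul (Aux2.avoids_mul (Aux2.avoids_mul (Aux2.avoids_mul
      (Aux2.avoids_C μ) (Aux2.avoids_pow av1 _)) (Aux2.avoids_pow av5 _))
      (Aux2.avoids_pow av2 _)) (Aux2.avoids_pow av3 _)
  · exact Aux2.avoids_mul (Aux2.avoids_mul (Aux2.avoids_C lam)
      (Aux2.avoids_pow av2 _)) (Aux2.avoids_pow av3 _)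
  · exact Aux2.avoids_mul (Aux2.avoids_mul (Aux2.avoids_pow av2 _)
      (Aux2.avoids_pow av3 _)) avA
  · exact Aux2.avoids_mul (Aux2.avoids_mul (Aux2.avoids_pow av2 _)
      (Aux2.avoids_pow av3 _)) avQ
  · simp only [map_mul, map_pow, map_add, map_one, MvPowerSeries.constantCoeff_C,
      MvPowerSeries.constantCoeff_X, zero_add, one_pow, mul_one]
    exact hlam
  · have hA' : constantCoeff (σ := Fin 6) (R := K) ((Aux2.psSubstHom hs) A) = constantCoeff (σ := Fin 6) (R := K) A :=
      Aux2.constantCoeff_psSubst hs A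
    simp only [map_mul, map_pow, map_add, map_one, MvPowerSeries.constantCoeff_X, zero_add,
      one_pow, one_mul, hA']
    exact hA
  · -- the main equation
    have hg8 : (C (σ := Fin 6) (R := K) μ * X 1 ^ (a + b + r + s) * X 5 ^ s * (X 2 + 1) ^ b *
        (X 3 + 1) ^ r : MvPowerSeries (Fin 6) K) ^ 8 =
        C (σ := Fin 6) (R := K) lam * (X 1 ^ (8 * (a + b + r)) * X 1 ^ t * X 1 ^ d) *
          (X 5 ^ t * X 5 ^ d) * (X 2 + 1) ^ (8 * b) * (X 3 + 1) ^ (8 * r) := by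
      have h1 : (C (σ := Fin 6) (R := K) μ) ^ 8 = C (σ := Fin 6) (R := K) lam := by rw [← map_pow, hμ]
      have h2 : ((X 1 : MvPowerSeries (Fin 6) K) ^ (a + b + r + s)) ^ 8 =
          X 1 ^ (8 * (a + b + r)) * X 1 ^ t * X 1 ^ d := by
        rw [← pow_mul, ← pow_add, ← pow_add]
        congr 1
        omega
      have h3 : ((X 5 : MvPowerSeries (Fin 6) K) ^ s) ^ 8 = X 5 ^ t * X 5 ^ d := by
        rw [← pow_mul, ← pow_add]
        congr 1
        omega
      have h4b : (((X 2 : MvPowerSeries (Fin 6) K) + 1) ^ b) ^ 8 = (X 2 + 1) ^ (8 * b) := by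
        rw [← pow_mul]
        congr 1
        omega
      have h4r : (((X 3 : MvPowerSeries (Fin 6) K) + 1) ^ r) ^ 8 = (X 3 + 1) ^ (8 * r) := by
        rw [← pow_mul]
        congr 1
        omega
      rw [mul_pow, mul_pow, mul_pow, mul_pow, h1, h2, h3, h4b, h4r]
    rw [hσ', hf]
    simp only [map_add, map_mul, map_pow, hX0, hX1, hX2, hX3, hX5, hCl]
    rw [h8, hg8]
    simp only [mul_pow]
    rw [ show 8 * (a + b + r + s) = 8 * (a + b + r) + (t + d) from by omega]
    linear_combination (C (σ := Fin 6) (R := K) lam * X 1 ^ (8 * (a + b + r)) * X 1 ^ t * X 1 ^ d *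
      X 1 ^ 8 * X 5 ^ t * X 5 ^ d * (X 2 + 1) ^ (8 * b) * (X 3 + 1) ^ (8 * r)) * h4
end
end

section
/- Let p be an odd prime, K a field, d ≥ 1 an integer, q = (p+1)(d+p²−1)/2, and λ ∈ K∖{0}. Let A, A′, B ∈ K[[x,y,v,w]] be units and Q, Q′ ∈ K[[x,y,v,w]] arbitrary. Then ord( y^{(p²−1)/2} w^{d}·(λ + v^{q}·Q) + x^{d+(p²+1)/2} v^{q}·A ) = (p²−1)/2 + d, and ord( y^{p²} w^{d}·B + x^{q} w^{d}·Q′ + x^{q+1}·A′ ) = p² + d. Consequently, the first blowup of the odd-characteristic example raises the residual order from (p²−1)/2 + d to p² + d, an increase of (p²+1)/2. -/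
noncomputable section

open MvPowerSeries

lemma coeff_mono_mul {K : Type*} [Field K] (m e : Fin 4 →₀ ℕ) (G : MvPowerSeries (Fin 4) K) :
    coeff e (monomial m 1 * G) = if m ≤ e then coeff (e - m) G else 0 := by
  classical
  simp [MvPowerSeries.coeff_monomial_mul]

lemma sum_mono {m e : Fin 4 →₀ ℕ} (h : m ≤ e) :
    (m.sum fun _ k => k) ≤ e.sum fun _ k => k :=
  Finsupp.sum_le_sum_index h (fun _ _ => monotone_id) (fun _ _ => rfl)

lemma sum_two (i j : Fin 4) (a b : ℕ) (_hij : i ≠ j) :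
    ((Finsupp.single i a + Finsupp.single j b).sum fun _ k => k) = a + b := by
  rw [Finsupp.sum_add_index (by simp) (by simp)]
  simp [Finsupp.sum_single_index]

/-- In `K[[x,y,v,w]]` (with `x = X 0`, `y = X 1`, `v = X 2`,
`w = X 3`), for units `A, A', B` and arbitrary `Q, Q'`:
`ord(y^{(p²−1)/2} w^d·(λ + v^q·Q) + x^{d+(p²+1)/2} v^q·A) = (p²−1)/2 + d` and
`ord(y^{p²} w^d·B + x^q w^d·Q' + x^{q+1}·A') = p² + d`.  Hence the first blowup of the
odd-characteristic example raises the residual order from `(p²−1)/2 + d` to `p² + d`,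
an increase of `(p²+1)/2`. -/
theorem oddp_residual_order_increase (p : ℕ) (hp : p.Prime) (hpodd : Odd p)
    (K : Type*) [Field K]
    (d : ℕ) (hd1 : 1 ≤ d)
    (q : ℕ) (hq : q = (p + 1) * (d + p ^ 2 - 1) / 2)
    (lam : K) (hlam : lam ≠ 0)
    (A A' B Q Q' : MvPowerSeries (Fin 4) K)
    (hA : constantCoeff (σ := Fin 4) (R := K) A ≠ 0)
    (hA' : constantCoeff (σ := Fin 4) (R := K) A' ≠ 0)
    (hB : constantCoeff (σ := Fin 4) (R := K) B ≠ 0) :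
    ordIs (X 1 ^ ((p ^ 2 - 1) / 2) * X 3 ^ d * (C (σ := Fin 4) (R := K) lam + X 2 ^ q * Q) +
        X 0 ^ (d + (p ^ 2 + 1) / 2) * X 2 ^ q * A) ((p ^ 2 - 1) / 2 + d) ∧
    ordIs (X 1 ^ p ^ 2 * X 3 ^ d * B + X 0 ^ q * X 3 ^ d * Q' +
        X 0 ^ (q + 1) * A') (p ^ 2 + d) := by
  classical
  -- arithmetic preliminaries
  have hp2 : 2 ≤ p := hp.two_le
  have hpmod : p % 2 = 1 := Nat.odd_iff.mp hpodd
  have hp3 : 3 ≤ p := by omega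
  have hP9 : 9 ≤ p ^ 2 := by calc 9 = 3 ^ 2 := by norm_num
                                 _ ≤ p ^ 2 := Nat.pow_le_pow_left hp3 2
  have hPodd : p ^ 2 % 2 = 1 := Nat.odd_iff.mp (hpodd.pow)
  have h2dvd : 2 ∣ (p + 1) * (d + p ^ 2 - 1) := Dvd.dvd.mul_right (by omega) _
  have h2q : 2 * q = (p + 1) * (d + p ^ 2 - 1) := by
    rw [hq, Nat.mul_div_cancel' h2dvd]
  have h4q : 4 * (d + p ^ 2 - 1) ≤ 2 * q := by
    rw [h2q]; exact Nat.mul_le_mul_right _ (by omega)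
  have hq1 : 1 ≤ q := by omega
  have hqPd : p ^ 2 + d ≤ q := by omega
  set a := (p ^ 2 - 1) / 2 with ha
  set b := d + (p ^ 2 + 1) / 2 with hb
  have hba : b = a + d + 1 := by omega
  -- monomial rewrites
  have hX : ∀ (i j : Fin 4) (u v : ℕ), (X i : MvPowerSeries (Fin 4) K) ^ u * X j ^ v =
      monomial (Finsupp.single i u + Finsupp.single j v) 1 := by
    intro i j u v
    rw [X_pow_eq, X_pow_eq, monomial_mul_monomial, one_mul]
  set m1 : Fin 4 →₀ ℕ := Finsupp.single 1 a + Finsupp.single 3 d with hm1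
  set m2 : Fin 4 →₀ ℕ := Finsupp.single 0 b + Finsupp.single 2 q with hm2
  set m1' : Fin 4 →₀ ℕ := Finsupp.single 1 (p ^ 2) + Finsupp.single 3 d with hm1'
  set m2' : Fin 4 →₀ ℕ := Finsupp.single 0 q + Finsupp.single 3 d with hm2'
  constructor
  · -- first series
    set G1 : MvPowerSeries (Fin 4) K := C (σ := Fin 4) (R := K) lam + X 2 ^ q * Q with hG1
    have key : ∀ e : Fin 4 →₀ ℕ,
        coeff e (X 1 ^ a * X 3 ^ d * G1 + X 0 ^ b * X 2 ^ q * A) =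
        (if m1 ≤ e then coeff (e - m1) G1 else 0) +
        (if m2 ≤ e then coeff (e - m2) A else 0) := by
      intro e
      rw [map_add, hX, hX, coeff_mono_mul, coeff_mono_mul]
    constructor
    · refine ⟨m1, by rw [hm1]; exact sum_two 1 3 a d (by decide), ?_⟩
      rw [key]
      have h1 : ¬ m2 ≤ m1 := by
        intro h
        have := h 0
        simp [hm1, hm2, Finsupp.single_apply] at this
        omega
      rw [if_neg h1, if_pos le_rfl, tsub_self]
      have hc0 : coeff 0 G1 = lam := by
        rw [hG1, map_add, X_pow_eq, coeff_mono_mul]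
        have : ¬ (Finsupp.single (2 : Fin 4) q ≤ 0) := by
          intro h
          have := h 2
          simp [Finsupp.single_apply] at this
          omega
        rw [if_neg this, add_zero]
        simp [coeff_C]
      rw [hc0, add_zero]
      exact hlam
    · intro e he
      rw [key] at he
      have hor : (if m1 ≤ e then coeff (e - m1) G1 else 0) ≠ 0 ∨
          (if m2 ≤ e then coeff (e - m2) A else 0) ≠ 0 := by
        by_contra hcon; push_neg at hcon; rw [hcon.1, hcon.2, add_zero] at he
        exact he rfl
      rcases hor with h | h
      · have hle : m1 ≤ e := by by_contra hn; rw [if_neg hn] at h; exact h rfl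
        have := sum_mono hle
        rw [hm1, sum_two 1 3 a d (by decide)] at this
        omega
      · have hle : m2 ≤ e := by by_contra hn; rw [if_neg hn] at h; exact h rfl
        have := sum_mono hle
        rw [hm2, sum_two 0 2 b q (by decide)] at this
        omega
  · -- second series
    have key : ∀ e : Fin 4 →₀ ℕ,
        coeff e (X 1 ^ p ^ 2 * X 3 ^ d * B + X 0 ^ q * X 3 ^ d * Q' +
          X 0 ^ (q + 1) * A') =
        (if m1' ≤ e then coeff (e - m1') B else 0) +
        (if m2' ≤ e then coeff (e - m2') Q' else 0) +
        (if Finsupp.single 0 (q + 1) ≤ e then coeff (e - Finsupp.single 0 (q + 1)) A' else 0) := by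
      intro e
      rw [map_add, map_add, hX, hX, X_pow_eq, coeff_mono_mul, coeff_mono_mul, coeff_mono_mul]
    constructor
    · refine ⟨m1', by rw [hm1']; exact sum_two 1 3 (p ^ 2) d (by decide), ?_⟩
      rw [key]
      have h1 : ¬ m2' ≤ m1' := by
        intro h
        have := h 0
        simp [hm1', hm2', Finsupp.single_apply] at this
        omega
      have h2 : ¬ Finsupp.single (0 : Fin 4) (q + 1) ≤ m1' := by
        intro h
        have := h 0
        simp [hm1', Finsupp.single_apply] at this
      rw [if_neg h1, if_neg h2, if_pos le_rfl, tsub_self, add_zero, add_zero]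
      rwa [coeff_zero_eq_constantCoeff]
    · intro e he
      rw [key] at he
      have hor : (if m1' ≤ e then coeff (e - m1') B else 0) ≠ 0 ∨
          (if m2' ≤ e then coeff (e - m2') Q' else 0) ≠ 0 ∨
          (if Finsupp.single 0 (q + 1) ≤ e then coeff (e - Finsupp.single 0 (q + 1)) A' else 0) ≠ 0 := by
        by_contra hcon; push_neg at hcon
        rw [hcon.1, hcon.2.1, hcon.2.2, add_zero, add_zero] at he
        exact he rfl
      rcases hor with h | h | h
      · have hle : m1' ≤ e := by by_contra hn; rw [if_neg hn] at h; exact h rfl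
        have := sum_mono hle
        rw [hm1', sum_two 1 3 (p ^ 2) d (by decide)] at this
        omega
      · have hle : m2' ≤ e := by by_contra hn; rw [if_neg hn] at h; exact h rfl
        have := sum_mono hle
        rw [hm2', sum_two 0 3 q d (by decide)] at this
        omega
      · have hle : Finsupp.single (0 : Fin 4) (q + 1) ≤ e := by
          by_contra hn; rw [if_neg hn] at h; exact h rfl
        have := sum_mono hle
        rw [Finsupp.sum_single_index (by simp)] at this
        omega
end
end
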